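/- arXiv:1512.05583 — 3 statements merged into one kernel-verified Lean document; each statement's English description precedes it below -/
import Mathlib

section
/- Let f : [a,b] → ℝ be continuously differentiable with a < b. Then sup_{t ∈ [a,b]} f(t)² ≤ (2/(b-a)) ∫_a^b f(s)² ds + 2(b-a) ∫_a^b f'(s)² ds. -/
/-!
Let `c` be a minimum point of `f²` on `[a, b]`; then `(b - a) f(c)² ≤ ∫ f²`. By the
fundamental theorem of calculus, `f(t)² - f(c)² = ∫_c^t 2 f f'` is at most `∫_a^b |2 f f'|`,
and the pointwise AM-GM bound `|2 f f'| ≤ f² / (b - a) + (b - a) f'²` turns this into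
`f(t)² ≤ (2 / (b - a)) ∫ f² + (b - a) ∫ f'²`.
-/

open Set intervalIntegral
open MeasureTheory (volume)

section

variable {a b : ℝ} {g g' : ℝ → ℝ}

theorem integral_eq_sub_of_hasDerivWithinAt_Icc
    (hderiv : ∀ t ∈ Icc a b, HasDerivWithinAt g (g' t) (Icc a b) t)
    (hcont : ContinuousOn g' (Icc a b)) {c d : ℝ} (hc : c ∈ Icc a b) (hd : d ∈ Icc a b)
    (hcd : c ≤ d) : ∫ s in c..d, g' s = g d - g c := by
  have hsub : Icc c d ⊆ Icc a b := Icc_subset_Icc hc.1 hd.2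
  refine integral_eq_sub_of_hasDerivAt_of_le hcd
    (fun x hx => (hderiv x (hsub hx)).continuousWithinAt.mono hsub) (fun x hx => ?_)
    ((hcont.mono hsub).intervalIntegrable_of_Icc hcd)
  exact (hderiv x (hsub (Ioo_subset_Icc_self hx))).hasDerivAt
    (Icc_mem_nhds (hc.1.trans_lt hx.1) (hx.2.trans_le hd.2))

theorem abs_sub_le_integral_abs_deriv
    (hderiv : ∀ t ∈ Icc a b, HasDerivWithinAt g (g' t) (Icc a b) t)
    (hcont : ContinuousOn g' (Icc a b)) {c d : ℝ} (hc : c ∈ Icc a b) (hd : d ∈ Icc a b) :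
    |g d - g c| ≤ ∫ s in a..b, |g' s| := by
  wlog hcd : c ≤ d generalizing c d
  · rw [abs_sub_comm]; exact this hd hc (le_of_not_ge hcd)
  calc |g d - g c| = |∫ s in c..d, g' s| := by
        rw [integral_eq_sub_of_hasDerivWithinAt_Icc hderiv hcont hc hd hcd]
    _ ≤ ∫ s in c..d, |g' s| := abs_integral_le_integral_abs hcd
    _ ≤ ∫ s in a..b, |g' s| :=
        integral_mono_interval hc.1 hcd hd.2 (Filter.Eventually.of_forall fun _ => abs_nonneg _)
          (hcont.abs.intervalIntegrable_of_Icc (hc.1.trans (hcd.trans hd.2)))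

theorem exists_mem_Icc_mul_le_integral (hab : a ≤ b) (hg : ContinuousOn g (Icc a b)) :
    ∃ c ∈ Icc a b, (b - a) * g c ≤ ∫ s in a..b, g s := by
  obtain ⟨c, hc, hmin⟩ := isCompact_Icc.exists_isMinOn (nonempty_Icc.mpr hab) hg
  refine ⟨c, hc, ?_⟩
  simpa [mul_comm] using integral_mono_on hab (intervalIntegrable_const (μ := volume))
    (hg.intervalIntegrable_of_Icc hab) fun _ hx => hmin hx

end

theorem abs_two_mul_le_sq_div_add_mul_sq {r : ℝ} (hr : 0 < r) (x y : ℝ) :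
    |2 * x * y| ≤ x ^ 2 / r + r * y ^ 2 := by
  rw [div_add' _ _ _ hr.ne', le_div_iff₀ hr]
  rcases abs_cases (2 * x * y) with ⟨h, -⟩ | ⟨h, -⟩ <;> rw [h]
  · nlinarith [sq_nonneg (x - r * y)]
  · nlinarith [sq_nonneg (x + r * y)]

theorem sq_le_integral_sq_add_integral_deriv_sq {a b : ℝ} (hab : a < b) {f f' : ℝ → ℝ}
    (hderiv : ∀ t ∈ Icc a b, HasDerivWithinAt f (f' t) (Icc a b) t)
    (hcont : ContinuousOn f' (Icc a b)) {t : ℝ} (ht : t ∈ Icc a b) :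
    f t ^ 2 ≤ 2 / (b - a) * (∫ s in a..b, f s ^ 2) + (b - a) * ∫ s in a..b, f' s ^ 2 := by
  have hba : 0 < b - a := sub_pos.mpr hab
  have hf : ContinuousOn f (Icc a b) := fun x hx => (hderiv x hx).continuousWithinAt
  have hf2 : IntervalIntegrable (fun s => f s ^ 2) volume a b :=
    (hf.pow 2).intervalIntegrable_of_Icc hab.le
  have hf'2 : IntervalIntegrable (fun s => f' s ^ 2) volume a b :=
    (hcont.pow 2).intervalIntegrable_of_Icc hab.le
  obtain ⟨c, hc, hmin⟩ :=
    exists_mem_Icc_mul_le_integral (g := fun s => f s ^ 2) hab.le (hf.pow 2)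
  have hsq_deriv : ∀ x ∈ Icc a b,
      HasDerivWithinAt (fun s => f s ^ 2) (2 * f x * f' x) (Icc a b) x := fun x hx => by
    simpa [mul_comm, mul_left_comm] using (hderiv x hx).fun_pow 2
  have hff' : ContinuousOn (fun s => 2 * f s * f' s) (Icc a b) :=
    (continuousOn_const.mul hf).mul hcont
  have hftc : f t ^ 2 - f c ^ 2 ≤ ∫ s in a..b, |2 * f s * f' s| :=
    (le_abs_self _).trans <| abs_sub_le_integral_abs_deriv hsq_deriv hff' hc ht
  have hamgm : ∫ s in a..b, |2 * f s * f' s| ≤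
      (∫ s in a..b, f s ^ 2) / (b - a) + (b - a) * ∫ s in a..b, f' s ^ 2 := by
    rw [← integral_div, ← integral_const_mul, ← integral_add (hf2.div_const _)
      (hf'2.const_mul _)]
    exact integral_mono_on hab.le (hff'.abs.intervalIntegrable_of_Icc hab.le)
      ((hf2.div_const _).add (hf'2.const_mul _))
      fun x _ => abs_two_mul_le_sq_div_add_mul_sq hba (f x) (f' x)
  have hfc : f c ^ 2 ≤ (∫ s in a..b, f s ^ 2) / (b - a) := by
    rw [le_div_iff₀ hba, mul_comm]; exact hmin
  calc f t ^ 2 ≤ (∫ s in a..b, f s ^ 2) / (b - a) + (∫ s in a..b, f s ^ 2) / (b - a)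
        + (b - a) * ∫ s in a..b, f' s ^ 2 := by linarith
    _ = _ := by ring

theorem stmt2 (a b : ℝ) (hab : a < b) (f f' : ℝ → ℝ)
    (hderiv : ∀ t ∈ Set.Icc a b, HasDerivWithinAt f (f' t) (Set.Icc a b) t)
    (hcont : ContinuousOn f' (Set.Icc a b)) :
    ∀ t ∈ Set.Icc a b,
      (f t)^2 ≤ (2/(b-a)) * ∫ s in a..b, (f s)^2 + 2*(b-a) * ∫ s in a..b, (f' s)^2 := by
  intro t ht
  have hba : 0 < b - a := sub_pos.mpr hab
  have hf : ContinuousOn f (Icc a b) := fun x hx => (hderiv x hx).continuousWithinAt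
  have hf'2 : 0 ≤ ∫ s in a..b, f' s ^ 2 := integral_nonneg hab.le fun _ _ => sq_nonneg _
  -- `∫` extends to the end of the line: the goal's right side is `2/(b-a) * ∫ (f² + const)`
  rw [integral_add (f := fun s => f s ^ 2) ((hf.pow 2).intervalIntegrable_of_Icc hab.le)
    intervalIntegrable_const, integral_const, smul_eq_mul]
  calc f t ^ 2 ≤ 2 / (b - a) * (∫ s in a..b, f s ^ 2) + (b - a) * ∫ s in a..b, f' s ^ 2 :=
        sq_le_integral_sq_add_integral_deriv_sq hab hderiv hcont ht
    _ ≤ _ := by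
        rw [mul_add, ← mul_assoc, ← mul_assoc, div_mul_cancel₀ _ hba.ne']
        nlinarith
end

section
/- Let X_N(t) = (1/√N) ∑_{n=1}^N [a_n cos(nt/N) + b_n sin(nt/N)] with a_n, b_n i.i.d., centered, unit variance. Then for every compact interval I of length |I| and every k ≥ 0, E[ sup_{t∈I} |X_N^{(k)}(t)|² ] ≤ 2(1 + |I|²). -/
/-!
For a `C¹` function, `f t = f c + ∫_c^t f'` and Cauchy–Schwarz give
`sup_{[c,d]} f² ≤ 2 f(c)² + 2 (d - c) ∫_c^d f'²`. Each derivative `X_N^{(j)}(t)` is a combination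
`∑ cᵢ(t) ξᵢ` of the orthonormal family `ξ = (aₙ, bₙ)` with `∑ cᵢ(t)² = N⁻¹ ∑ₙ (n/N)^{2j} ≤ 1`,
so `E X_N^{(k)}(c)² ≤ 1` and `E ∫_c^d (X_N^{(k+1)})² ≤ d - c`; taking expectations in the
deterministic bound for `f = X_N^{(k)}` gives the claim.
-/

open MeasureTheory ProbabilityTheory Finset Real

lemma sq_intervalIntegral_le {g : ℝ → ℝ} {a b : ℝ} (hab : a ≤ b) (hg : Continuous g) :
    (∫ t in a..b, g t) ^ 2 ≤ (b - a) * ∫ t in a..b, g t ^ 2 := by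
  -- the quadratic `x ↦ ∫ (g - x)²` is nonnegative, so its discriminant is not
  have hquad : ∀ x : ℝ,
      0 ≤ (b - a) * (x * x) + (-2 * ∫ t in a..b, g t) * x + ∫ t in a..b, g t ^ 2 := by
    intro x
    have hint : ∫ t in a..b, (g t - x) ^ 2 =
        (b - a) * (x * x) + (-2 * ∫ t in a..b, g t) * x + ∫ t in a..b, g t ^ 2 := by
      have h1 : IntervalIntegrable (fun t => g t ^ 2) volume a b :=
        (hg.pow 2).intervalIntegrable a b
      have h2 : IntervalIntegrable (fun t => 2 * g t * x) volume a b :=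
        ((continuous_const.mul hg).mul continuous_const).intervalIntegrable a b
      simp_rw [sub_sq]
      rw [intervalIntegral.integral_add (h1.sub h2) intervalIntegrable_const,
        intervalIntegral.integral_sub h1 h2, intervalIntegral.integral_mul_const,
        intervalIntegral.integral_const_mul, intervalIntegral.integral_const, smul_eq_mul]
      ring
    exact hint ▸ intervalIntegral.integral_nonneg hab fun t _ => sq_nonneg (g t - x)
  have := discrim_le_zero hquad
  rw [discrim] at this
  linarith

lemma sq_le_of_hasDerivAt {f f' : ℝ → ℝ} (hf : ∀ t, HasDerivAt f (f' t) t)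
    (hf' : Continuous f') {a b t : ℝ} (ht : t ∈ Set.Icc a b) :
    f t ^ 2 ≤ 2 * f a ^ 2 + 2 * ((b - a) * ∫ s in a..b, f' s ^ 2) := by
  have hftc : f t = f a + ∫ s in a..t, f' s := by
    rw [intervalIntegral.integral_eq_sub_of_hasDerivAt (fun s _ => hf s)
      (hf'.intervalIntegrable a t)]
    ring
  have hcs : (∫ s in a..t, f' s) ^ 2 ≤ (b - a) * ∫ s in a..b, f' s ^ 2 :=
    calc (∫ s in a..t, f' s) ^ 2 ≤ (t - a) * ∫ s in a..t, f' s ^ 2 :=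
          sq_intervalIntegral_le ht.1 hf'
      _ ≤ (b - a) * ∫ s in a..b, f' s ^ 2 := by
          refine mul_le_mul (by linarith [ht.2]) ?_
            (intervalIntegral.integral_nonneg ht.1 fun s _ => sq_nonneg _)
            (by linarith [ht.1, ht.2])
          exact intervalIntegral.integral_mono_interval le_rfl ht.1 ht.2
            (ae_of_all _ fun s => sq_nonneg _) ((hf'.pow 2).intervalIntegrable a b)
  rw [hftc]
  nlinarith [sq_nonneg (f a - ∫ s in a..t, f' s)]

lemma iSup_sq_le_of_hasDerivAt {f f' : ℝ → ℝ} (hf : ∀ t, HasDerivAt f (f' t) t)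
    (hf' : Continuous f') {a b : ℝ} (hab : a ≤ b) :
    ⨆ t ∈ Set.Icc a b, |f t| ^ 2 ≤ 2 * f a ^ 2 + 2 * ((b - a) * ∫ s in a..b, f' s ^ 2) := by
  have hbound : 0 ≤ 2 * f a ^ 2 + 2 * ((b - a) * ∫ s in a..b, f' s ^ 2) := by
    have : 0 ≤ ∫ s in a..b, f' s ^ 2 :=
      intervalIntegral.integral_nonneg hab fun s _ => sq_nonneg (f' s)
    have := sub_nonneg.2 hab
    positivity
  refine Real.iSup_le (fun t => Real.iSup_le (fun ht => ?_) hbound) hbound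
  rw [sq_abs]
  exact sq_le_of_hasDerivAt hf hf' ht

section Orthonormal

variable {Ω ι : Type*} [MeasurableSpace Ω] {μ : Measure Ω} {ξ : ι → Ω → ℝ}

lemma ProbabilityTheory.iIndepFun.pairwise_integral_mul_eq_zero (hindep : iIndepFun ξ μ)
    (hξ : ∀ i, AEStronglyMeasurable (ξ i) μ)
    (hmean : ∀ i, ∫ ω, ξ i ω ∂μ = 0) : Pairwise fun i j => ∫ ω, ξ i ω * ξ j ω ∂μ = 0 :=
  fun i j hij => by
    simpa [hmean] using (hindep.indepFun hij).integral_mul_eq_mul_integral (hξ i) (hξ j)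

lemma sq_sum_mul_eq_sum_sum (s : Finset ι) (c x : ι → ℝ) :
    (∑ i ∈ s, c i * x i) ^ 2 = ∑ i ∈ s, ∑ j ∈ s, c i * c j * (x i * x j) := by
  rw [sq, sum_mul_sum]
  exact sum_congr rfl fun i _ => sum_congr rfl fun j _ => by ring

lemma intervalIntegral_sq_sum_mul_eq {c : ι → ℝ → ℝ} (hc : ∀ i, Continuous (c i))
    (s : Finset ι) (x : ι → ℝ) (a b : ℝ) :
    ∫ t in a..b, (∑ i ∈ s, c i t * x i) ^ 2 =
      ∑ i ∈ s, ∑ j ∈ s, (∫ t in a..b, c i t * c j t) * (x i * x j) := by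
  simp_rw [sq_sum_mul_eq_sum_sum]
  rw [intervalIntegral.integral_finsetSum fun i _ =>
    (continuous_finsetSum s fun j _ => by fun_prop).intervalIntegrable a b]
  refine sum_congr rfl fun i _ => ?_
  rw [intervalIntegral.integral_finsetSum fun j _ =>
    (by fun_prop : Continuous _).intervalIntegrable a b]
  exact sum_congr rfl fun j _ => intervalIntegral.integral_mul_const _ _

lemma integrable_sum_sum_mul (hξ : ∀ i, MemLp (ξ i) 2 μ) (s : Finset ι) (C : ι → ι → ℝ) :
    Integrable (fun ω => ∑ i ∈ s, ∑ j ∈ s, C i j * (ξ i ω * ξ j ω)) μ :=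
  integrable_finsetSum _ fun i _ => integrable_finsetSum _ fun j _ =>
    ((hξ i).integrable_mul (hξ j)).const_mul _

lemma integral_sum_sum_mul_of_orthonormal (hξ : ∀ i, MemLp (ξ i) 2 μ)
    (hnorm : ∀ i, ∫ ω, ξ i ω ^ 2 ∂μ = 1)
    (horth : Pairwise fun i j => ∫ ω, ξ i ω * ξ j ω ∂μ = 0) (s : Finset ι) (C : ι → ι → ℝ) :
    ∫ ω, ∑ i ∈ s, ∑ j ∈ s, C i j * (ξ i ω * ξ j ω) ∂μ = ∑ i ∈ s, C i i := by
  have hint : ∀ i j, Integrable (fun ω => C i j * (ξ i ω * ξ j ω)) μ := fun i j =>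
    ((hξ i).integrable_mul (hξ j)).const_mul _
  rw [integral_finsetSum _ fun i _ => integrable_finsetSum _ fun j _ => hint i j]
  refine sum_congr rfl fun i hi => ?_
  rw [integral_finsetSum _ fun j _ => hint i j, sum_eq_single_of_mem i hi]
  · simp only [integral_const_mul, ← sq, hnorm, mul_one]
  · intro j _ hji
    rw [integral_const_mul, horth hji.symm, mul_zero]

lemma integrable_sq_sum_mul (hξ : ∀ i, MemLp (ξ i) 2 μ) (s : Finset ι) (c : ι → ℝ) :
    Integrable (fun ω => (∑ i ∈ s, c i * ξ i ω) ^ 2) μ := by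
  simp_rw [sq_sum_mul_eq_sum_sum]
  exact integrable_sum_sum_mul hξ s _

lemma integral_sq_sum_mul_of_orthonormal (hξ : ∀ i, MemLp (ξ i) 2 μ)
    (hnorm : ∀ i, ∫ ω, ξ i ω ^ 2 ∂μ = 1)
    (horth : Pairwise fun i j => ∫ ω, ξ i ω * ξ j ω ∂μ = 0) (s : Finset ι) (c : ι → ℝ) :
    ∫ ω, (∑ i ∈ s, c i * ξ i ω) ^ 2 ∂μ = ∑ i ∈ s, c i ^ 2 := by
  simp_rw [sq_sum_mul_eq_sum_sum, integral_sum_sum_mul_of_orthonormal hξ hnorm horth, sq]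

lemma integrable_intervalIntegral_sq_sum_mul (hξ : ∀ i, MemLp (ξ i) 2 μ) {c : ι → ℝ → ℝ}
    (hc : ∀ i, Continuous (c i)) (s : Finset ι) (a b : ℝ) :
    Integrable (fun ω => ∫ t in a..b, (∑ i ∈ s, c i t * ξ i ω) ^ 2) μ := by
  simp_rw [intervalIntegral_sq_sum_mul_eq hc]
  exact integrable_sum_sum_mul hξ s _

lemma integral_intervalIntegral_sq_sum_mul_of_orthonormal (hξ : ∀ i, MemLp (ξ i) 2 μ)
    (hnorm : ∀ i, ∫ ω, ξ i ω ^ 2 ∂μ = 1)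
    (horth : Pairwise fun i j => ∫ ω, ξ i ω * ξ j ω ∂μ = 0) {c : ι → ℝ → ℝ}
    (hc : ∀ i, Continuous (c i)) (s : Finset ι) (a b : ℝ) :
    ∫ ω, (∫ t in a..b, (∑ i ∈ s, c i t * ξ i ω) ^ 2) ∂μ = ∫ t in a..b, ∑ i ∈ s, c i t ^ 2 := by
  simp_rw [intervalIntegral_sq_sum_mul_eq hc, integral_sum_sum_mul_of_orthonormal hξ hnorm horth,
    sq]
  exact (intervalIntegral.integral_finsetSum fun i _ =>
    ((hc i).mul (hc i)).intervalIntegrable a b).symm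

lemma integral_iSup_sq_sum_mul_le (hξ : ∀ i, MemLp (ξ i) 2 μ) (hnorm : ∀ i, ∫ ω, ξ i ω ^ 2 ∂μ = 1)
    (horth : Pairwise fun i j => ∫ ω, ξ i ω * ξ j ω ∂μ = 0) (s : Finset ι)
    {c c' : ι → ℝ → ℝ} (hc : ∀ i t, HasDerivAt (c i) (c' i t) t) (hc' : ∀ i, Continuous (c' i))
    (hc_le : ∀ t, ∑ i ∈ s, c i t ^ 2 ≤ 1) (hc'_le : ∀ t, ∑ i ∈ s, c' i t ^ 2 ≤ 1)
    {a b : ℝ} (hab : a ≤ b) :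
    ∫ ω, ⨆ t ∈ Set.Icc a b, |∑ i ∈ s, c i t * ξ i ω| ^ 2 ∂μ ≤ 2 * (1 + (b - a) ^ 2) := by
  have hderiv : ∀ ω t, HasDerivAt (fun t => ∑ i ∈ s, c i t * ξ i ω)
      (∑ i ∈ s, c' i t * ξ i ω) t := fun ω t =>
    HasDerivAt.fun_sum fun i _ => (hc i t).mul_const _
  have hint_le : ∫ t in a..b, ∑ i ∈ s, c' i t ^ 2 ≤ b - a := by
    simpa using intervalIntegral.integral_mono_on (μ := volume) hab
      ((continuous_finsetSum s fun i _ => (hc' i).pow 2).intervalIntegrable a b)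
      intervalIntegrable_const fun t _ => hc'_le t
  have hsq := integrable_sq_sum_mul hξ s fun i => c i a
  have hsq' := integrable_intervalIntegral_sq_sum_mul hξ hc' s a b
  calc ∫ ω, ⨆ t ∈ Set.Icc a b, |∑ i ∈ s, c i t * ξ i ω| ^ 2 ∂μ
      ≤ ∫ ω, 2 * (∑ i ∈ s, c i a * ξ i ω) ^ 2 +
          2 * ((b - a) * ∫ t in a..b, (∑ i ∈ s, c' i t * ξ i ω) ^ 2) ∂μ :=
        integral_mono_of_nonneg
          (ae_of_all _ fun ω => Real.iSup_nonneg fun t => Real.iSup_nonneg fun _ => by positivity)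
          ((hsq.const_mul 2).add ((hsq'.const_mul _).const_mul 2))
          (ae_of_all _ fun ω => iSup_sq_le_of_hasDerivAt (hderiv ω)
            (continuous_finsetSum s fun i _ => (hc' i).mul continuous_const) hab)
    _ = 2 * ∑ i ∈ s, c i a ^ 2 + 2 * ((b - a) * ∫ t in a..b, ∑ i ∈ s, c' i t ^ 2) := by
        rw [integral_add (hsq.const_mul 2) ((hsq'.const_mul _).const_mul 2), integral_const_mul,
          integral_const_mul, integral_const_mul,
          integral_sq_sum_mul_of_orthonormal hξ hnorm horth,
          integral_intervalIntegral_sq_sum_mul_of_orthonormal hξ hnorm horth hc']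
    _ ≤ 2 * (1 + (b - a) ^ 2) := by
        nlinarith [hc_le a, mul_le_mul_of_nonneg_left hint_le (sub_nonneg.2 hab)]

end Orthonormal

section Trigonometric

variable {ι : Type*}

/-- `trigCoeff ν k (inl n)` and `trigCoeff ν k (inr n)` are the `k`-th derivatives of
`t ↦ cos (ν n * t)` and `t ↦ sin (ν n * t)`. -/
noncomputable def trigCoeff (ν : ι → ℝ) (k : ℕ) : ι ⊕ ι → ℝ → ℝ
  | .inl n, t => ν n ^ k * cos (ν n * t + k * (π / 2))
  | .inr n, t => ν n ^ k * sin (ν n * t + k * (π / 2))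

lemma hasDerivAt_trigCoeff (ν : ι → ℝ) (k : ℕ) (i : ι ⊕ ι) (t : ℝ) :
    HasDerivAt (trigCoeff ν k i) (trigCoeff ν (k + 1) i t) t := by
  have hphase : ((k + 1 : ℕ) : ℝ) * (π / 2) = k * (π / 2) + π / 2 := by push_cast; ring
  have hlin (n : ι) : HasDerivAt (fun t => ν n * t + k * (π / 2)) (ν n) t := by
    simpa using ((hasDerivAt_id t).const_mul (ν n)).add_const ((k : ℝ) * (π / 2))
  cases i with
  | inl n =>
    refine ((hlin n).cos.const_mul (ν n ^ k)).congr_deriv ?_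
    simp only [trigCoeff, hphase, ← add_assoc, cos_add_pi_div_two]
    ring
  | inr n =>
    refine ((hlin n).sin.const_mul (ν n ^ k)).congr_deriv ?_
    simp only [trigCoeff, hphase, ← add_assoc, sin_add_pi_div_two]
    ring

lemma continuous_trigCoeff (ν : ι → ℝ) (k : ℕ) (i : ι ⊕ ι) : Continuous (trigCoeff ν k i) :=
  Differentiable.continuous fun t => (hasDerivAt_trigCoeff ν k i t).differentiableAt

lemma sum_trigCoeff_sq (s : Finset ι) (ν : ι → ℝ) (k : ℕ) (t : ℝ) :
    ∑ i ∈ s.disjSum s, trigCoeff ν k i t ^ 2 = ∑ n ∈ s, (ν n ^ k) ^ 2 := by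
  rw [sum_disjSum, ← sum_add_distrib]
  refine sum_congr rfl fun n _ => ?_
  simp only [trigCoeff]
  rw [mul_pow, mul_pow, ← mul_add, cos_sq_add_sin_sq, mul_one]

end Trigonometric

lemma iteratedDeriv_sum_mul {ι : Type*} {c : ℕ → ι → ℝ → ℝ}
    (hc : ∀ k i t, HasDerivAt (c k i) (c (k + 1) i t) t) (s : Finset ι) (x : ι → ℝ) (k : ℕ) :
    iteratedDeriv k (fun t => ∑ i ∈ s, c 0 i t * x i) = fun t => ∑ i ∈ s, c k i t * x i := by
  induction k with
  | zero => exact iteratedDeriv_zero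
  | succ k ih =>
    rw [iteratedDeriv_succ, ih]
    exact funext fun t => (HasDerivAt.fun_sum fun i _ => (hc k i t).mul_const (x i)).deriv

lemma sum_sq_pow_div_le (N k : ℕ) : ∑ n ∈ Icc 1 N, (((n : ℝ) / N) ^ k) ^ 2 ≤ N := by
  calc ∑ n ∈ Icc 1 N, (((n : ℝ) / N) ^ k) ^ 2 ≤ ∑ _n ∈ Icc 1 N, (1 : ℝ) := by
        refine sum_le_sum fun n hn => ?_
        have h0 : 0 ≤ (n : ℝ) / N := by positivity
        have h1 : (n : ℝ) / N ≤ 1 :=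
          div_le_one_of_le₀ (by exact_mod_cast (mem_Icc.1 hn).2) (by positivity)
        exact pow_le_one₀ (pow_nonneg h0 k) (pow_le_one₀ h0 h1)
    _ = N := by simp

lemma iteratedDeriv_randomTrig {Ω : Type*} (N : ℕ) (α β : ℕ → Ω → ℝ) (ω : Ω) (k : ℕ) :
    iteratedDeriv k (fun s => (1 / √N) *
        ∑ n ∈ Icc 1 N, (α n ω * cos (n * s / N) + β n ω * sin (n * s / N))) =
      fun t => ∑ i ∈ (Icc 1 N).disjSum (Icc 1 N),
        trigCoeff (fun n : ℕ => (n : ℝ) / N) k i t / √N * Sum.elim α β i ω := by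
  rw [← iteratedDeriv_sum_mul (fun k i t => (hasDerivAt_trigCoeff _ k i t).div_const _)]
  congr 1
  funext t
  rw [sum_disjSum, ← sum_add_distrib, mul_sum]
  refine sum_congr rfl fun n _ => ?_
  simp only [trigCoeff, pow_zero, CharP.cast_eq_zero, zero_mul, add_zero, one_mul,
    Sum.elim_inl, Sum.elim_inr, mul_div_right_comm]
  ring

theorem stmt12_general {Ω : Type*} [MeasureSpace Ω]
    (N : ℕ) (a b : ℕ → Ω → ℝ)
    (hindep : iIndepFun (Sum.elim a b) ℙ)
    (hid : ∀ i j : ℕ ⊕ ℕ, IdentDistrib (Sum.elim a b i) (Sum.elim a b j) ℙ ℙ)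
    (hInta : ∀ n, Integrable (fun ω => (a n ω)^2) ℙ)
    (hmeana : ∀ n, ∫ ω, a n ω = 0)
    (hvara : ∀ n, ∫ ω, (a n ω)^2 = 1)
    (c d : ℝ) (hcd : c ≤ d) (k : ℕ) :
    (∫ ω, ⨆ t ∈ Set.Icc c d, |iteratedDeriv k (fun s => (1 / Real.sqrt N) *
        ∑ n ∈ Finset.Icc 1 N,
          (a n ω * Real.cos (n * s / N) + b n ω * Real.sin (n * s / N))) t|^2)
      ≤ 2 * (1 + (d - c)^2) := by
  have hid0 : ∀ i, IdentDistrib (Sum.elim a b i) (a 0) ℙ ℙ := fun i => hid i (.inl 0)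
  have hξ : ∀ i, MemLp (Sum.elim a b i) 2 ℙ := fun i => (hid0 i).memLp_iff.2 <|
    (memLp_two_iff_integrable_sq (hid0 i).aemeasurable_snd.aestronglyMeasurable).2 (hInta 0)
  have hnorm : ∀ i, ∫ ω, Sum.elim a b i ω ^ 2 = 1 := fun i =>
    ((hid0 i).comp (measurable_id.pow_const 2)).integral_eq.trans (hvara 0)
  have horth := hindep.pairwise_integral_mul_eq_zero (fun i => (hξ i).aestronglyMeasurable)
    fun i => (hid0 i).integral_eq.trans (hmeana 0)
  set ν : ℕ → ℝ := fun n => n / N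
  have hsum_le : ∀ j t,
      ∑ i ∈ (Icc 1 N).disjSum (Icc 1 N), (trigCoeff ν j i t / √N) ^ 2 ≤ 1 := by
    intro j t
    simp_rw [div_pow, ← sum_div, sum_trigCoeff_sq, Real.sq_sqrt (Nat.cast_nonneg N)]
    exact div_le_one_of_le₀ (sum_sq_pow_div_le N j) (Nat.cast_nonneg N)
  simp_rw [iteratedDeriv_randomTrig]
  exact integral_iSup_sq_sum_mul_le hξ hnorm horth _
    (fun i t => (hasDerivAt_trigCoeff ν k i t).div_const _)
    (fun i => (continuous_trigCoeff ν (k + 1) i).div_const _) (hsum_le k) (hsum_le (k + 1)) hcd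

theorem stmt12 {Ω : Type*} [MeasureSpace Ω] [IsProbabilityMeasure (ℙ : Measure Ω)]
    (N : ℕ) (hN : 1 ≤ N) (a b : ℕ → Ω → ℝ)
    (hmeasa : ∀ n, Measurable (a n)) (hmeasb : ∀ n, Measurable (b n))
    (hindep : iIndepFun (Sum.elim a b) ℙ)
    (hid : ∀ i j : ℕ ⊕ ℕ, IdentDistrib (Sum.elim a b i) (Sum.elim a b j) ℙ ℙ)
    (hInta : ∀ n, Integrable (fun ω => (a n ω)^2) ℙ)
    (hmeana : ∀ n, ∫ ω, a n ω = 0)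
    (hvara : ∀ n, ∫ ω, (a n ω)^2 = 1)
    (c d : ℝ) (hcd : c ≤ d) (k : ℕ) :
    (∫ ω, ⨆ t ∈ Set.Icc c d, |iteratedDeriv k (fun s => (1 / Real.sqrt N) *
        ∑ n ∈ Finset.Icc 1 N,
          (a n ω * Real.cos (n * s / N) + b n ω * Real.sin (n * s / N))) t|^2)
      ≤ 2 * (1 + (d - c)^2) :=
  stmt12_general N a b hindep hid hInta hmeana hvara c d hcd k
end

section
/- Let Z be a nonnegative integer-valued random variable such that P(Z ≥ k) ≤ C L^{k−1/2} / √(k!(k−1)!) for all k ≥ 1, for some constants C, L > 0. Then for every r > 1, E[Z^r] ≤ C ( ∑_{k=1}^∞ L^{(2k−1)/(2r)} / (k!(k−1)!)^{1/(2r)} )^r, and in particular all moments of Z are finite. -/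
/-!
Write `Z = ∑_{k ≥ 0} 1_{Z > k}`. Minkowski's inequality in `L^r` gives
`‖Z‖_r ≤ ∑_k ‖1_{Z > k}‖_r = ∑_k P(Z > k)^{1/r}`, and the assumed tail bound turns the right-hand
side into `C^{1/r}` times the series of the theorem, which converges by the ratio test since the
ratio of consecutive terms is `(L² / ((k + 2)(k + 1)))^{1/(2r)} → 0`. Finiteness of `‖Z‖_r` for
every `r` gives all moments.
-/

open MeasureTheory ProbabilityTheory Filter Topology Finset Real
open scoped ENNReal Nat

section LayerCake

variable {Ω : Type*} [MeasurableSpace Ω] {μ : Measure Ω}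

lemma sum_range_ite_lt_of_le {m n : ℕ} (h : m ≤ n) :
    ∑ k ∈ range n, (if k < m then (1 : ℝ) else 0) = m := by
  have : {k ∈ range n | k < m} = range m := by ext k; simp only [mem_filter, mem_range]; omega
  rw [sum_boole, this, card_range]

theorem eLpNorm_natCast_le_tsum_measure_rpow (Z : Ω → ℕ) (hZ : Measurable Z) {p : ℝ≥0∞}
    (hp : 1 ≤ p) (hp_top : p ≠ ∞) :
    eLpNorm (fun ω => (Z ω : ℝ)) p μ ≤ ∑' k : ℕ, μ {ω | k < Z ω} ^ p.toReal⁻¹ := by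
  have hp0 : p ≠ 0 := (zero_lt_one.trans_le hp).ne'
  set f : ℕ → Ω → ℝ := fun k => {ω | k < Z ω}.indicator fun _ => 1
  have hf_meas : ∀ k, MeasurableSet {ω | k < Z ω} := fun k => hZ measurableSet_Ioi
  have hf : ∀ k, AEStronglyMeasurable (f k) μ := fun k =>
    (measurable_const.indicator (hf_meas k)).aestronglyMeasurable
  refine Lp.eLpNorm_le_of_ae_tendsto (u := atTop) (f := fun n => ∑ k ∈ range n, f k)
    (Eventually.of_forall fun n => ?_) (fun n => Finset.aestronglyMeasurable_sum _ fun k _ => hf k)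
    (ae_of_all _ fun ω => tendsto_atTop_of_eventually_const (i₀ := Z ω) fun n hn => ?_)
  · calc eLpNorm (∑ k ∈ range n, f k) p μ
        ≤ ∑ k ∈ range n, eLpNorm (f k) p μ := eLpNorm_sum_le (fun k _ => hf k) hp
      _ = ∑ k ∈ range n, μ {ω | k < Z ω} ^ p.toReal⁻¹ := by
          refine sum_congr rfl fun k _ => ?_
          rw [eLpNorm_indicator_const (hf_meas k) hp0 hp_top]
          simp only [enorm_one, one_div, one_mul]
      _ ≤ _ := ENNReal.sum_le_tsum _
  · simp only [Finset.sum_apply, f, Set.indicator_apply, Set.mem_ofPred_eq]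
    exact sum_range_ite_lt_of_le hn

theorem eLpNorm_natCast_le_of_measure_lt_le (Z : Ω → ℕ) (hZ : Measurable Z) {C r : ℝ}
    (hC : 0 ≤ C) (hr : 1 ≤ r) {b : ℕ → ℝ} (hb : ∀ k, 0 ≤ b k)
    (hsum : Summable fun k => b k ^ r⁻¹)
    (htail : ∀ k, μ {ω | k < Z ω} ≤ ENNReal.ofReal (C * b k)) :
    eLpNorm (fun ω => (Z ω : ℝ)) (ENNReal.ofReal r) μ ≤
      ENNReal.ofReal (C ^ r⁻¹ * ∑' k, b k ^ r⁻¹) := by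
  have hr0 : 0 < r := zero_lt_one.trans_le hr
  calc eLpNorm (fun ω => (Z ω : ℝ)) (ENNReal.ofReal r) μ
      ≤ ∑' k : ℕ, μ {ω | k < Z ω} ^ r⁻¹ := by
        simpa [ENNReal.toReal_ofReal hr0.le] using
          eLpNorm_natCast_le_tsum_measure_rpow (μ := μ) Z hZ (ENNReal.one_le_ofReal.2 hr)
            ENNReal.ofReal_ne_top
    _ ≤ ∑' k : ℕ, ENNReal.ofReal (C ^ r⁻¹ * b k ^ r⁻¹) := by
        refine ENNReal.tsum_le_tsum fun k => ?_
        rw [← mul_rpow hC (hb k),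
          ← ENNReal.ofReal_rpow_of_nonneg (mul_nonneg hC (hb k)) (by positivity)]
        exact ENNReal.rpow_le_rpow (htail k) (by positivity)
    _ = ENNReal.ofReal (C ^ r⁻¹ * ∑' k, b k ^ r⁻¹) := by
        rw [← ENNReal.ofReal_tsum_of_nonneg
          (fun k => mul_nonneg (by positivity) (rpow_nonneg (hb k) _)) (hsum.mul_left _),
          tsum_mul_left]

variable (Z : Ω → ℕ) (hZ : Measurable Z) {C r : ℝ} (hC : 0 ≤ C) (hr : 1 ≤ r)
  {b : ℕ → ℝ} (hb : ∀ k, 0 ≤ b k) (hsum : Summable fun k => b k ^ r⁻¹)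
  (htail : ∀ k, μ {ω | k < Z ω} ≤ ENNReal.ofReal (C * b k))
include hZ hC hr hb hsum htail

theorem memLp_natCast_of_measure_lt_le : MemLp (fun ω => (Z ω : ℝ)) (ENNReal.ofReal r) μ :=
  ⟨(measurable_from_top.comp hZ).aestronglyMeasurable,
    (eLpNorm_natCast_le_of_measure_lt_le Z hZ hC hr hb hsum htail).trans_lt ENNReal.ofReal_lt_top⟩

theorem integral_natCast_rpow_le_of_measure_lt_le :
    ∫ ω, (Z ω : ℝ) ^ r ∂μ ≤ C * (∑' k, b k ^ r⁻¹) ^ r := by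
  have hr0 : 0 < r := zero_lt_one.trans_le hr
  have hS : 0 ≤ ∑' k, b k ^ r⁻¹ := tsum_nonneg fun k => rpow_nonneg (hb k) _
  have h := eLpNorm_natCast_le_of_measure_lt_le Z hZ hC hr hb hsum htail
  rw [(memLp_natCast_of_measure_lt_le Z hZ hC hr hb hsum htail).eLpNorm_eq_integral_rpow_norm
    (by simpa using hr0) ENNReal.ofReal_ne_top, ENNReal.toReal_ofReal hr0.le,
    ENNReal.ofReal_le_ofReal_iff (by positivity)] at h
  simp only [Real.norm_natCast] at h
  rwa [rpow_inv_le_iff_of_pos (integral_nonneg fun ω => by positivity) (by positivity) hr0,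
    mul_rpow (by positivity) hS, rpow_inv_rpow hC hr0.ne'] at h

end LayerCake

theorem summable_rpow_of_ratio_tendsto_zero {f : ℕ → ℝ} (hf : ∀ k, 0 < f k)
    (h : Tendsto (fun k => f (k + 1) / f k) atTop (𝓝 0)) {s : ℝ} (hs : 0 < s) :
    Summable fun k => f k ^ s := by
  refine summable_of_ratio_test_tendsto_lt_one zero_lt_one
    (Eventually.of_forall fun k => (rpow_pos_of_pos (hf k) s).ne') ?_
  have hpow : Tendsto (fun k => (f (k + 1) / f k) ^ s) atTop (𝓝 0) := by
    simpa [zero_rpow hs.ne'] using h.rpow_const (Or.inr hs.le)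
  refine hpow.congr fun k => ?_
  rw [div_rpow (hf _).le (hf _).le, norm_of_nonneg (rpow_nonneg (hf _).le _),
    norm_of_nonneg (rpow_nonneg (hf _).le _)]

/-- `tailBound L k` is the square of the bound `L ^ (k + 1/2) / √((k + 1)! k!)` on `P(Z > k)`,
up to the factor `C`. -/
noncomputable def tailBound (L : ℝ) (k : ℕ) : ℝ := L ^ (2 * k + 1) / ((k + 1)! * k !)

lemma tailBound_pos {L : ℝ} (hL : 0 < L) (k : ℕ) : 0 < tailBound L k := by
  unfold tailBound; positivity

lemma tailBound_nonneg {L : ℝ} (hL : 0 ≤ L) (k : ℕ) : 0 ≤ tailBound L k := by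
  unfold tailBound; positivity

lemma tailBound_succ_div {L : ℝ} (hL : L ≠ 0) (k : ℕ) :
    tailBound L (k + 1) / tailBound L k = L ^ 2 / ((k + 2) * (k + 1)) := by
  simp only [tailBound, Nat.factorial_succ]
  push_cast
  field_simp
  ring

lemma tendsto_tailBound_succ_div {L : ℝ} (hL : L ≠ 0) :
    Tendsto (fun k => tailBound L (k + 1) / tailBound L k) atTop (𝓝 0) := by
  simp only [tailBound_succ_div hL]
  have hk : ∀ c : ℝ, Tendsto (fun k : ℕ => (k : ℝ) + c) atTop atTop := fun c =>
    tendsto_atTop_add_const_right _ c tendsto_natCast_atTop_atTop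
  exact tendsto_const_nhds.div_atTop ((hk 2).atTop_mul_atTop₀ (hk 1))

lemma summable_tailBound_rpow {L s : ℝ} (hL : 0 < L) (hs : 0 < s) :
    Summable fun k => tailBound L k ^ s :=
  summable_rpow_of_ratio_tendsto_zero (tailBound_pos hL) (tendsto_tailBound_succ_div hL.ne') hs

lemma rpow_div_sqrt_eq_sqrt_tailBound {L : ℝ} (hL : 0 ≤ L) (k : ℕ) :
    L ^ (((k + 1 : ℕ) : ℝ) - 1 / 2) / √((k + 1)! * k !) = √(tailBound L k) := by
  rw [tailBound, sqrt_div' _ (by positivity), sqrt_eq_rpow (L ^ _), ← rpow_natCast,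
    ← rpow_mul hL]
  congr 2
  push_cast
  ring

lemma sqrt_tailBound_rpow_inv {L : ℝ} (hL : 0 ≤ L) (r : ℝ) (k : ℕ) :
    √(tailBound L k) ^ r⁻¹ =
      L ^ ((2 * ((k : ℝ) + 1) - 1) / (2 * r)) / ((k + 1)! * k ! : ℝ) ^ (1 / (2 * r)) := by
  rw [sqrt_eq_rpow, ← rpow_mul (tailBound_nonneg hL k), tailBound,
    div_rpow (by positivity) (by positivity), ← rpow_natCast, ← rpow_mul hL]
  congr 2 <;> push_cast <;> ring

theorem stmt14 {Ω : Type*} [MeasureSpace Ω] [IsProbabilityMeasure (ℙ : Measure Ω)]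
    (Z : Ω → ℕ) (hZ : Measurable Z) (C L : ℝ) (hC : 0 < C) (hL : 0 < L)
    (hbound : ∀ k : ℕ, 1 ≤ k → (ℙ {ω | k ≤ Z ω}).toReal
        ≤ C * L ^ ((k : ℝ) - 1/2) /
          Real.sqrt ((Nat.factorial k : ℝ) * (Nat.factorial (k - 1) : ℝ))) :
    ∀ r : ℝ, 1 < r →
      ((∫ ω, (Z ω : ℝ) ^ r) ≤ C * (∑' k : ℕ,
          L ^ ((2 * ((k : ℝ) + 1) - 1) / (2 * r)) /
            ((Nat.factorial (k + 1) : ℝ) * (Nat.factorial k : ℝ)) ^ (1 / (2 * r))) ^ r)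
      ∧ ∀ m : ℕ, Integrable (fun ω => (Z ω : ℝ) ^ m) ℙ := by
  have htail (k : ℕ) : (ℙ : Measure Ω) {ω | k < Z ω} ≤ ENNReal.ofReal (C * √(tailBound L k)) := by
    rw [ENNReal.le_ofReal_iff_toReal_le (measure_ne_top _ _) (by positivity),
      ← rpow_div_sqrt_eq_sqrt_tailBound hL.le, ← mul_div_assoc]
    simpa only [Nat.add_sub_cancel, Nat.add_one_le_iff] using hbound (k + 1) le_add_self
  have hsum (s : ℝ) (hs : 0 < s) : Summable fun k => √(tailBound L k) ^ s⁻¹ := by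
    simpa only [sqrt_eq_rpow, one_div, ← rpow_mul (tailBound_pos hL _).le] using
      summable_tailBound_rpow hL (by positivity : 0 < 2⁻¹ * s⁻¹)
  intro r hr
  refine ⟨?_, fun m => ?_⟩
  · simpa only [sqrt_tailBound_rpow_inv hL.le] using integral_natCast_rpow_le_of_measure_lt_le Z hZ
      hC.le hr.le (fun k => sqrt_nonneg _) (hsum r (by linarith)) htail
  · have hm := memLp_natCast_of_measure_lt_le Z hZ hC.le (le_add_of_nonneg_left m.cast_nonneg)
      (fun k => sqrt_nonneg _) (hsum _ (by positivity)) htail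
    have hle : (m : ℝ≥0∞) ≤ ENNReal.ofReal (m + 1) := by
      rw [← ENNReal.ofReal_natCast]
      exact ENNReal.ofReal_le_ofReal (le_add_of_nonneg_right zero_le_one)
    simpa only [RCLike.norm_natCast] using (hm.mono_exponent hle).integrable_norm_pow'
end
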